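/- arXiv:2404.08402 — 2 statements merged into one kernel-verified Lean document; each statement's English description precedes it below -/
import Mathlib

section
/- Let F be a finite field of cardinality p^ℓ, 0 ≤ h < ℓ, λ ∈ F^× with λ^{1+p^h} ≠ 1. Galois p^h-self-dual 2-quasi λ-constacyclic codes over F of length 2n exist if and only if the polynomial X^{1+p^h} + 1 has a root in F. -/
/-!
If `C` is self-dual and invariant under the shift `T`, every codeword `c` is isotropic, and
`⟨Tc, Tc⟩ = ⟨c, c⟩ + (λ^{1+p^h} - 1)(u^{1+p^h} + v^{1+p^h})` for the last coordinate pair `(u, v)`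
of `c`. So `u^{1+p^h} + v^{1+p^h} = 0` there, and since shifting brings every coordinate to the
last place, at every coordinate. A nonzero codeword then yields the root `u / v` or `v / u`.
Conversely, for a root `α` the graph `{(x, α x)}` is shift-invariant and self-dual, the latter
because `x ↦ x^{p^h}` is injective.
-/

/-- The `λ`-constacyclic shift on `Fⁿ`. -/
def cshift {F : Type*} [Field F] {n : ℕ} [NeZero n] (lam : F) (a : Fin n → F) :
    Fin n → F :=
  fun i => (if i = 0 then lam else 1) * a (i - 1)

/-- The Galois inner product `⟨a,b⟩ = ∑ aᵢ bᵢ^e` on `Fⁿ × Fⁿ`, where `e = p^h`. -/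
def gin {F : Type*} [Field F] {n : ℕ} (e : ℕ)
    (a b : (Fin n → F) × (Fin n → F)) : F :=
  (∑ i, a.1 i * b.1 i ^ e) + (∑ i, a.2 i * b.2 i ^ e)

section

variable {F : Type*} [Field F] {n : ℕ}

theorem gin_zero_left (e : ℕ) (a : (Fin n → F) × (Fin n → F)) : gin e 0 a = 0 := by
  simp [gin]

theorem exists_pow_add_one_eq_zero {k : ℕ} {u v : F} (huv : u ^ k + v ^ k = 0)
    (h : u ≠ 0 ∨ v ≠ 0) : ∃ α : F, α ^ k + 1 = 0 := by
  rcases h with hu | hv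
  · exact ⟨v / u, by rw [div_pow, div_add_one (pow_ne_zero k hu), add_comm, huv, zero_div]⟩
  · exact ⟨u / v, by rw [div_pow, div_add_one (pow_ne_zero k hv), huv, zero_div]⟩

abbrev graphCode (α : F) : Submodule F ((Fin n → F) × (Fin n → F)) :=
  (α • LinearMap.id).graph

theorem gin_of_mem_graphCode (e : ℕ) {α : F} {c a : (Fin n → F) × (Fin n → F)}
    (hc : c ∈ graphCode α) (ha : a ∈ graphCode α) :
    gin e c a = (1 + α ^ (1 + e)) * ∑ i, c.1 i * a.1 i ^ e := by
  rw [LinearMap.mem_graph_iff] at hc ha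
  simp only [gin, hc, ha, Finset.mul_sum, ← Finset.sum_add_distrib]
  refine Finset.sum_congr rfl fun i _ => ?_
  simp only [LinearMap.smul_apply, LinearMap.id_apply, Pi.smul_apply, smul_eq_mul]
  ring

/-- Orthogonality to `(δⱼ, α δⱼ)` gives `(a₂ j)^e = (α a₁ j)^e`, so `a₂ j = α a₁ j` by
injectivity. -/
theorem graphCode_eq_orthogonal {e : ℕ} {α : F} (hα : α ^ (1 + e) + 1 = 0)
    (hinj : Function.Injective fun x : F => x ^ e) :
    (graphCode (n := n) α : Set ((Fin n → F) × (Fin n → F))) =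
      {a | ∀ c ∈ graphCode α, gin e c a = 0} := by
  ext a
  refine ⟨fun ha c hc => ?_, fun H => ?_⟩
  · rw [gin_of_mem_graphCode e hc ha, add_comm, hα, zero_mul]
  · rw [SetLike.mem_coe, LinearMap.mem_graph_iff]
    funext j
    have hj := H (Pi.single j 1, α • Pi.single j 1) (by simp [LinearMap.mem_graph_iff])
    simp only [gin, Pi.single_apply, ite_mul, one_mul, zero_mul, Finset.sum_ite_eq',
      Finset.mem_univ, ↓reduceIte, Pi.smul_apply, smul_eq_mul, mul_ite, mul_one, mul_zero] at hj
    apply hinj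
    simp only [LinearMap.smul_apply, LinearMap.id_apply, Pi.smul_apply, smul_eq_mul]
    linear_combination a.2 j ^ e * hα - α ^ e * hj

variable [NeZero n]

theorem exists_ne_zero_of_eq_orthogonal (e : ℕ) {C : Set ((Fin n → F) × (Fin n → F))}
    (hdual : C = {a | ∀ c ∈ C, gin e c a = 0}) : ∃ c ∈ C, c ≠ 0 := by
  by_contra! hC
  have hmem : ((fun _ => 1, 0) : (Fin n → F) × (Fin n → F)) ∈ C := by
    rw [hdual]
    intro c hc
    rw [hC c hc, gin_zero_left]
  exact one_ne_zero (congrFun (congrArg Prod.fst (hC _ hmem)) 0)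

theorem cshift_smul (lam α : F) (a : Fin n → F) :
    cshift lam (α • a) = α • cshift lam a := by
  funext i
  simp only [cshift, Pi.smul_apply, smul_eq_mul]
  ring

theorem sum_cshift_mul_pow (e : ℕ) (lam : F) (a b : Fin n → F) :
    ∑ i, cshift lam a i * cshift lam b i ^ e
      = (∑ i, a i * b i ^ e) + (lam ^ (1 + e) - 1) * (a (0 - 1) * b (0 - 1) ^ e) := by
  have hterm : ∀ i : Fin n, cshift lam a i * cshift lam b i ^ e
      = a (i - 1) * b (i - 1) ^ e
        + if i = 0 then (lam ^ (1 + e) - 1) * (a (i - 1) * b (i - 1) ^ e) else 0 := by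
    intro i
    by_cases hi : i = 0
    · simp only [cshift, hi, ↓reduceIte, mul_pow, pow_add, pow_one]
      ring
    · simp only [cshift, hi, ↓reduceIte, one_mul, add_zero]
  rw [Finset.sum_congr rfl fun i _ => hterm i, Finset.sum_add_distrib,
    Fintype.sum_equiv (Equiv.subRight 1) (fun i => a (i - 1) * b (i - 1) ^ e)
      (fun i => a i * b i ^ e) fun _ => rfl]
  simp

theorem gin_cshift (e : ℕ) (lam : F) (a b : (Fin n → F) × (Fin n → F)) :
    gin e (cshift lam a.1, cshift lam a.2) (cshift lam b.1, cshift lam b.2)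
      = gin e a b + (lam ^ (1 + e) - 1)
          * (a.1 (0 - 1) * b.1 (0 - 1) ^ e + a.2 (0 - 1) * b.2 (0 - 1) ^ e) := by
  simp only [gin, sum_cshift_mul_pow]
  ring

theorem coord_isotropic_of_cshift_mem {e : ℕ} {lam : F} (hlam : lam ^ (1 + e) ≠ 1)
    {C : Set ((Fin n → F) × (Fin n → F))}
    (hshift : ∀ c ∈ C, (cshift lam c.1, cshift lam c.2) ∈ C)
    (hiso : ∀ c ∈ C, gin e c c = 0) :
    ∀ c ∈ C, ∀ j, c.1 j * c.1 j ^ e + c.2 j * c.2 j ^ e = 0 := by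
  have hlast : ∀ c ∈ C, c.1 (0 - 1) * c.1 (0 - 1) ^ e + c.2 (0 - 1) * c.2 (0 - 1) ^ e = 0 := by
    intro c hc
    have h := hiso _ (hshift c hc)
    rw [gin_cshift, hiso c hc, zero_add] at h
    exact (mul_eq_zero.mp h).resolve_left (sub_ne_zero.mpr hlam)
  obtain ⟨m, rfl⟩ := Nat.exists_eq_succ_of_ne_zero (NeZero.ne n)
  intro c hc j
  induction j using Fin.reverseInduction generalizing c with
  | last =>
    rw [← sub_eq_iff_eq_add.mpr (Fin.last_add_one m).symm]
    exact hlast c hc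
  | cast i ih =>
    have hsucc : i.succ - 1 = i.castSucc := sub_eq_iff_eq_add.mpr Fin.coeSucc_eq_succ.symm
    simpa only [cshift, if_neg (Fin.succ_ne_zero i), one_mul, hsucc] using ih _ (hshift c hc)

theorem cshift_mem_graphCode {α : F} (lam : F) {c : (Fin n → F) × (Fin n → F)}
    (hc : c ∈ graphCode α) : (cshift lam c.1, cshift lam c.2) ∈ graphCode α := by
  rw [LinearMap.mem_graph_iff] at hc ⊢
  simp [hc, cshift_smul]

end

theorem stmt_10_general {F : Type*} [Field F] [Fintype F] {p ℓ h n : ℕ} [NeZero n]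
    (hp : p.Prime) (hcard : Fintype.card F = p ^ ℓ)
    (lam : F) (hlam1 : lam ^ (1 + p ^ h) ≠ 1) :
    (∃ C : Submodule F ((Fin n → F) × (Fin n → F)),
      (∀ c ∈ C, (cshift lam c.1, cshift lam c.2) ∈ C) ∧
      (C : Set ((Fin n → F) × (Fin n → F))) = {a | ∀ c ∈ C, gin (p ^ h) c a = 0}) ↔
    ∃ α : F, α ^ (1 + p ^ h) + 1 = 0 := by
  constructor
  · rintro ⟨C, hshift, hdual⟩
    have hiso : ∀ c ∈ C, gin (p ^ h) c c = 0 := fun c hc => hdual.subset hc c hc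
    obtain ⟨c, hc, hc0⟩ := exists_ne_zero_of_eq_orthogonal _ hdual
    obtain ⟨j, hj⟩ : ∃ j, c.1 j ≠ 0 ∨ c.2 j ≠ 0 := by
      by_contra! hzero
      exact hc0 (Prod.ext (funext fun j => (hzero j).1) (funext fun j => (hzero j).2))
    refine exists_pow_add_one_eq_zero ?_ hj
    rw [add_comm 1, pow_succ', pow_succ']
    exact coord_isotropic_of_cshift_mem hlam1 hshift hiso c hc j
  · rintro ⟨α, hα⟩
    have := Fact.mk hp
    have := charP_of_card_eq_prime_pow (R := F) hcard
    exact ⟨graphCode α, fun c => cshift_mem_graphCode lam,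
      graphCode_eq_orthogonal hα (iterateFrobenius F p h).injective⟩

theorem stmt_10 {F : Type*} [Field F] [Fintype F] {p ℓ h n : ℕ} [NeZero n]
    (hp : p.Prime) (hcard : Fintype.card F = p ^ ℓ) (hh : h < ℓ)
    (lam : F) (hlam : lam ≠ 0) (hlam1 : lam ^ (1 + p ^ h) ≠ 1) :
    (∃ C : Submodule F ((Fin n → F) × (Fin n → F)),
      (∀ c ∈ C, (cshift lam c.1, cshift lam c.2) ∈ C) ∧
      (C : Set ((Fin n → F) × (Fin n → F))) = {a | ∀ c ∈ C, gin (p ^ h) c a = 0}) ↔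
    ∃ α : F, α ^ (1 + p ^ h) + 1 = 0 :=
  stmt_10_general hp hcard lam hlam1
end

section
/- Let F be a finite field with gcd(n, q) = 1, λ ∈ F^×, R_λ = F[X]/⟨Xⁿ − λ⟩, 0 ≤ h < ℓ with λ^{1+p^h} = 1. Let C = C_{a,0} ⊕ C_{0,a'} ⊕ C_{b,bg} be a 2-quasi λ-constacyclic code, where a, a', b ∈ R_λ with ab = a'b = 0 and g a unit of the ideal C_b = R_λb. Then C is Galois p^h-self-dual if and only if dim_F C = n and a·a* = a'·(a')* = a·b* = a*·b = a'·b* = (a')*·b = b·b*·(1 + g·g*) = 0, where * is the p^h-semilinear automorphism of R_λ given by a(X) ↦ a^{(p^h)}(X^{nt−1}) mod (Xⁿ − λ). -/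
/-!
Identify `R_λ` with `Fⁿ` through coefficient vectors. The Galois inner product of `(y, y')` and
`(z, z')` is then the constant coefficient of `y z* + y' z'*`: the monomial
`Xⁱ (Xʲ)* = X^(i + (nt - 1) j)` is a scalar only for `i = j`, where it equals `λ^(ti) = 1`.
This pairing is nondegenerate (it also shows that `*` is injective, hence bijective), so the code
of all `(ua + wb, va' + wbg)` is self-orthogonal exactly when the seven products vanish; the unit
`g` of `R_λ b` is what lets one cancel `g` in `a' (bg)* = 0` and `a'* (bg) = 0`. Finally the
Galois dual is the preimage of the ordinary dual under the coordinatewise Frobenius, so it has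
dimension `2n - dim C`, and a self-orthogonal `C` is self-dual exactly when `dim C = n`.
-/

open Polynomial

/-- The quotient ring `R_λ = F[X]/⟨Xⁿ − λ⟩`. -/
abbrev Rlam (F : Type*) [Field F] (n : ℕ) (lam : F) :=
  F[X] ⧸ Ideal.span {(X : F[X]) ^ n - C lam}

theorem Ideal.Quotient.exists_ringHom_coe_eq {R S : Type*} [CommRing R] [Semiring S]
    {I : Ideal R} {σ : R ⧸ I → S} (Ψ : R →+* S) (hσ : ∀ f, σ (Ideal.Quotient.mk I f) = Ψ f) :
    ∃ σ' : R ⧸ I →+* S, ⇑σ' = σ := by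
  have hker : ∀ f ∈ I, Ψ f = 0 := fun f hf => by
    rw [← hσ, Ideal.Quotient.eq_zero_iff_mem.mpr hf, ← map_zero (Ideal.Quotient.mk I), hσ,
      map_zero]
  refine ⟨Ideal.Quotient.lift I Ψ hker, funext fun x => ?_⟩
  obtain ⟨f, rfl⟩ := Ideal.Quotient.mk_surjective x
  rw [Ideal.Quotient.lift_mk, hσ]

theorem Nat.dvd_add_pred_mul_iff {n t i j : ℕ} (ht : 0 < t) (hi : i < n) (hj : j < n) :
    n ∣ i + (n * t - 1) * j ↔ i = j := by
  have hnt : 1 ≤ n * t := Nat.mul_pos (by omega) ht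
  rw [← ZMod.natCast_eq_zero_iff, Nat.cast_add, Nat.cast_mul, Nat.cast_sub hnt, Nat.cast_mul,
    ZMod.natCast_self, zero_mul, Nat.cast_one, zero_sub, neg_one_mul, ← sub_eq_add_neg,
    sub_eq_zero, ZMod.natCast_eq_natCast_iff', Nat.mod_eq_of_lt hi, Nat.mod_eq_of_lt hj]

namespace Rlam

variable {F : Type*} [Field F] {n : ℕ} {lam : F}

local notation "x" => Ideal.Quotient.mk (Ideal.span {(X : F[X]) ^ n - C lam}) (X : F[X])

theorem mk_C_mul (c : F) (y : Rlam F n lam) :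
    Ideal.Quotient.mk _ (C c) * y = c • y :=
  (Algebra.smul_def c y).symm

theorem X_pow_eq (m : ℕ) :
    x ^ m = Ideal.Quotient.mk _ (C (lam ^ (m / n))) * x ^ (m % n) := by
  have hXn : x ^ n = Ideal.Quotient.mk _ (C lam) := by
    rw [← map_pow, Ideal.Quotient.eq]
    exact Ideal.subset_span rfl
  rw [map_pow C, map_pow (Ideal.Quotient.mk _), ← hXn, ← pow_mul, ← pow_add, Nat.div_add_mod]

theorem exists_ringHom_of_forall_mk (φ : F →+* F) (e : ℕ) {σ : Rlam F n lam → Rlam F n lam}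
    (hσ : ∀ f : F[X], σ (Ideal.Quotient.mk _ f) =
      Ideal.Quotient.mk _ (f.sum fun i a => C (φ a) * X ^ (e * i))) :
    ∃ σ' : Rlam F n lam →+* Rlam F n lam, ⇑σ' = σ ∧
      (∀ c, σ' (Ideal.Quotient.mk _ (C c)) = Ideal.Quotient.mk _ (C (φ c))) ∧ σ' x = x ^ e := by
  have hΨ : ∀ f : F[X], σ (Ideal.Quotient.mk _ f) =
      Ideal.Quotient.mk _ (eval₂ (C.comp φ) (X ^ e) f) := fun f => by
    simp only [hσ, eval₂_eq_sum, ← pow_mul]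
    rfl
  obtain ⟨σ', rfl⟩ := Ideal.Quotient.exists_ringHom_coe_eq
    ((Ideal.Quotient.mk _).comp (eval₂RingHom (C.comp φ) (X ^ e))) hΨ
  exact ⟨σ', rfl, fun c => by rw [hΨ, eval₂_C]; rfl, by rw [hΨ, eval₂_X, map_pow]⟩

variable (ι : (Fin n → F) ≃ₗ[F] Rlam F n lam)
  (hι : ∀ v : Fin n → F, ι v = Ideal.Quotient.mk _ (∑ i : Fin n, C (v i) * (X : F[X]) ^ (i : ℕ)))
include hι

theorem apply_eq_sum_smul (v : Fin n → F) : ι v = ∑ i, v i • x ^ (i : ℕ) := by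
  simp only [hι, map_sum, map_mul, map_pow, mk_C_mul]

theorem apply_single (i : Fin n) (c : F) : ι (Pi.single i c) = c • x ^ (i : ℕ) := by
  rw [apply_eq_sum_smul ι hι, Finset.sum_eq_single i (fun j _ hj => by simp [hj]) (by simp),
    Pi.single_eq_same]

theorem symm_X_pow_apply_zero [NeZero n] (m : ℕ) :
    ι.symm (x ^ m) 0 = if n ∣ m then lam ^ (m / n) else 0 := by
  rw [X_pow_eq, mk_C_mul, ← apply_single ι hι ⟨m % n, Nat.mod_lt _ (NeZero.pos n)⟩,
    LinearEquiv.symm_apply_apply, Pi.single_apply]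
  simp [Fin.ext_iff, Nat.dvd_iff_mod_eq_zero, eq_comm]

section Twisted

variable [NeZero n] {σ : Rlam F n lam →+* Rlam F n lam} {φ : F →+* F}
  (hσC : ∀ c, σ (Ideal.Quotient.mk _ (C c)) = Ideal.Quotient.mk _ (C (φ c)))
  {t : ℕ} (ht : 0 < t) (hlt : lam ^ t = 1)
  (hσX : σ (Ideal.Quotient.mk _ X) = Ideal.Quotient.mk _ X ^ (n * t - 1))
include hσC ht hlt hσX

theorem symm_mul_map_apply_zero (v w : Fin n → F) :
    ι.symm (ι v * σ (ι w)) 0 = ∑ i, v i * φ (w i) := by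
  have hσι : σ (ι w) = ∑ j, φ (w j) • x ^ ((n * t - 1) * (j : ℕ)) := by
    rw [apply_eq_sum_smul ι hι, map_sum]
    refine Finset.sum_congr rfl fun j _ => ?_
    rw [← mk_C_mul, map_mul, hσC, map_pow, hσX, ← pow_mul, mk_C_mul]
  rw [hσι, apply_eq_sum_smul ι hι v, Finset.sum_mul_sum]
  simp only [smul_mul_smul_comm, ← pow_add, map_sum, map_smul, Finset.sum_apply, Pi.smul_apply,
    smul_eq_mul, symm_X_pow_apply_zero ι hι]
  refine Finset.sum_congr rfl fun i _ => ?_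
  rw [Finset.sum_eq_single i]
  · have hdiag : (i : ℕ) + (n * t - 1) * i = n * (t * i) := by
      have hnt : 1 ≤ n * t := Nat.mul_pos (NeZero.pos n) ht
      rw [← mul_assoc]
      zify [hnt]
      ring
    rw [hdiag, if_pos (dvd_mul_right _ _), Nat.mul_div_cancel_left _ (NeZero.pos n), pow_mul,
      hlt, one_pow, mul_one]
  · intro j _ hji
    rw [if_neg (mt (Nat.dvd_add_pred_mul_iff ht i.isLt j.isLt).1 (fun h => hji (Fin.ext h).symm)),
      mul_zero]
  · simp

theorem symm_single_mul_map_apply_zero (k : Fin n) (w : Fin n → F) :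
    ι.symm (ι (Pi.single k 1) * σ (ι w)) 0 = φ (w k) := by
  simp [symm_mul_map_apply_zero ι hι hσC ht hlt hσX, Pi.single_apply]

theorem surjective_of_twisted [Finite F] : Function.Surjective σ := by
  have : Finite (Rlam F n lam) := Finite.of_equiv _ ι.toEquiv
  refine Finite.injective_iff_surjective.1 ((injective_iff_map_eq_zero σ).2 fun y hy => ?_)
  obtain ⟨w, rfl⟩ := ι.surjective y
  suffices w = 0 by rw [this, map_zero]
  funext k
  have := symm_single_mul_map_apply_zero ι hι hσC ht hlt hσX k w
  rwa [hy, mul_zero, map_zero, Pi.zero_apply, eq_comm, map_eq_zero] at this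

theorem eq_zero_of_forall_symm_mul_apply_zero [Finite F] {z : Rlam F n lam}
    (hz : ∀ y, ι.symm (y * z) 0 = 0) : z = 0 := by
  obtain ⟨z', rfl⟩ := surjective_of_twisted ι hι hσC ht hlt hσX z
  obtain ⟨w, rfl⟩ := ι.surjective z'
  suffices w = 0 by rw [this, map_zero, map_zero]
  funext k
  have := symm_single_mul_map_apply_zero ι hι hσC ht hlt hσX k w
  rwa [hz, eq_comm, map_eq_zero] at this

theorem gin_symm {e : ℕ} (hφ : ∀ c, φ c = c ^ e) (y₁ y₂ z₁ z₂ : Rlam F n lam) :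
    gin e (ι.symm y₁, ι.symm y₂) (ι.symm z₁, ι.symm z₂) = ι.symm (y₁ * σ z₁ + y₂ * σ z₂) 0 := by
  obtain ⟨v₁, rfl⟩ := ι.surjective y₁
  obtain ⟨v₂, rfl⟩ := ι.surjective y₂
  obtain ⟨w₁, rfl⟩ := ι.surjective z₁
  obtain ⟨w₂, rfl⟩ := ι.surjective z₂
  simp only [gin, LinearEquiv.symm_apply_apply, map_add, Pi.add_apply,
    symm_mul_map_apply_zero ι hι hσC ht hlt hσX, hφ]

theorem subset_setOf_gin_iff {e : ℕ} (hφ : ∀ c, φ c = c ^ e) {a a' b g : Rlam F n lam}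
    {CM : Submodule F ((Fin n → F) × (Fin n → F))}
    (hCM : (CM : Set ((Fin n → F) × (Fin n → F))) =
      {z | ∃ u v w : Rlam F n lam,
        z = (ι.symm (u * a + w * b), ι.symm (v * a' + w * (b * g)))}) :
    (CM : Set ((Fin n → F) × (Fin n → F))) ⊆ {y | ∀ c ∈ CM, gin e c y = 0} ↔
      ∀ u v w u' v' w', ι.symm ((u * a + w * b) * σ (u' * a + w' * b) +
        (v * a' + w * (b * g)) * σ (v' * a' + w' * (b * g))) 0 = 0 := by
  have hmem : ∀ z, z ∈ CM ↔ ∃ u v w : Rlam F n lam,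
      z = (ι.symm (u * a + w * b), ι.symm (v * a' + w * (b * g))) := fun z => by
    rw [← SetLike.mem_coe, hCM]
    rfl
  constructor
  · intro H u v w u' v' w'
    rw [← gin_symm ι hι hσC ht hlt hσX hφ]
    exact H ((hmem _).2 ⟨u', v', w', rfl⟩) _ ((hmem _).2 ⟨u, v, w, rfl⟩)
  · intro H y hy c hc
    obtain ⟨u', v', w', rfl⟩ := (hmem y).1 hy
    obtain ⟨u, v, w, rfl⟩ := (hmem c).1 hc
    rw [gin_symm ι hι hσC ht hlt hσX hφ]
    exact H u v w u' v' w'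

end Twisted

end Rlam

theorem twoQuasi_selfOrthogonal_iff {R M : Type*} [CommRing R] [AddCommGroup M]
    {σ : R →+* R} (hσ : Function.Surjective σ) (τ : R →+ M)
    (hτ : ∀ z, (∀ y, τ (y * z) = 0) → z = 0) {a a' b g g' : R} (hbg : b * (g * g') = b) :
    (∀ u v w u' v' w' : R, τ ((u * a + w * b) * σ (u' * a + w' * b) +
        (v * a' + w * (b * g)) * σ (v' * a' + w' * (b * g))) = 0) ↔
      a * σ a = 0 ∧ a' * σ a' = 0 ∧ a * σ b = 0 ∧ σ a * b = 0 ∧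
        a' * σ b = 0 ∧ σ a' * b = 0 ∧ b * σ b * (1 + g * σ g) = 0 := by
  constructor
  · intro H
    have hτσ : ∀ z, (∀ y, τ (σ y * z) = 0) → z = 0 := fun z hz => hτ z fun y => by
      obtain ⟨y, rfl⟩ := hσ y
      exact hz y
    have haa : a * σ a = 0 := hτ _ fun y => by
      convert H y 0 0 1 0 0 using 2; simp; ring
    have ha'a' : a' * σ a' = 0 := hτ _ fun y => by
      convert H 0 y 0 0 1 0 using 2; simp; ring
    have hab : a * σ b = 0 := hτ _ fun y => by
      convert H y 0 0 0 0 1 using 2; simp; ring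
    have hσab : σ a * b = 0 := hτσ _ fun y => by
      convert H 0 0 1 y 0 0 using 2; simp; ring
    have ha'bg : a' * σ (b * g) = 0 := hτ _ fun y => by
      convert H 0 y 0 0 0 1 using 2; simp; ring
    have hσa'bg : σ a' * (b * g) = 0 := hτσ _ fun y => by
      convert H 0 0 1 0 y 0 using 2; simp; ring
    have hbb : b * σ b * (1 + g * σ g) = 0 := hτ _ fun y => by
      convert H 0 0 y 0 0 1 using 2; simp; ring
    refine ⟨haa, ha'a', hab, hσab, ?_, ?_, hbb⟩
    · rw [← hbg, ← mul_assoc, map_mul, ← mul_assoc, ha'bg, zero_mul]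
    · rw [← hbg]
      linear_combination g' * hσa'bg
  · rintro ⟨haa, ha'a', hab, hσab, ha'b, hσa'b, hbb⟩ u v w u' v' w'
    convert map_zero τ using 2
    simp only [map_add, map_mul]
    linear_combination (u * σ u') * haa + (u * σ w') * hab + (w * σ u') * hσab
      + (v * σ v') * ha'a' + (v * (σ w' * σ g)) * ha'b + (w * (σ v' * g)) * hσa'b
      + (w * σ w') * hbb

namespace LinearMap.BilinForm

variable {K V : Type*} [Field K] [AddCommGroup V] [Module K V] [FiniteDimensional K V]
  {B : LinearMap.BilinForm K V}

theorem natCard_preimage_orthogonal (hB : B.Nondegenerate) (ψ : V ≃ V) (W : Submodule K V) :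
    Nat.card (ψ ⁻¹' B.orthogonal W) = Nat.card K ^ (Module.finrank K V - Module.finrank K W) := by
  rw [Nat.card_preimage_of_injective ψ.injective (by simp), SetLike.coe_sort_coe,
    ← finrank_orthogonal hB W]
  exact Module.natCard_eq_pow_finrank

theorem coe_eq_preimage_orthogonal_iff [Finite K] (hB : B.Nondegenerate) (ψ : V ≃ V)
    (W : Submodule K V) :
    (W : Set V) = ψ ⁻¹' B.orthogonal W ↔
      (W : Set V) ⊆ ψ ⁻¹' B.orthogonal W ∧
        Module.finrank K W + Module.finrank K W = Module.finrank K V := by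
  have : Finite V := Module.finite_of_finite K
  have hcard := natCard_preimage_orthogonal hB ψ W
  have hW : Nat.card W = Nat.card K ^ Module.finrank K W := Module.natCard_eq_pow_finrank
  have hle := Submodule.finrank_le W
  have hpow : Function.Injective (Nat.card K ^ · : ℕ → ℕ) :=
    Nat.pow_right_injective Finite.one_lt_card
  constructor
  · intro h
    refine ⟨h.le, ?_⟩
    have := hpow (hW.symm.trans ((congrArg (fun s : Set V => Nat.card s) h).trans hcard))
    omega
  · rintro ⟨hsub, hdim⟩
    refine Set.eq_of_subset_of_ncard_le hsub ?_ (Set.toFinite _)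
    rw [← Nat.card_coe_set_eq, ← Nat.card_coe_set_eq, hcard, SetLike.coe_sort_coe, hW]
    exact le_of_eq (congrArg _ (by omega))

end LinearMap.BilinForm

section ProdDot

open Matrix

variable (K m : Type*) [Field K] [Fintype m]

def prodDotBilin : LinearMap.BilinForm K ((m → K) × (m → K)) :=
  (dotProductBilin K K).compl₁₂ (LinearMap.fst K _ _) (LinearMap.fst K _ _) +
    (dotProductBilin K K).compl₁₂ (LinearMap.snd K _ _) (LinearMap.snd K _ _)

variable {K m} in
theorem prodDotBilin_apply (x y : (m → K) × (m → K)) :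
    prodDotBilin K m x y = x.1 ⬝ᵥ y.1 + x.2 ⬝ᵥ y.2 := rfl

theorem prodDotBilin_nondegenerate : (prodDotBilin K m).Nondegenerate := by
  refine ⟨fun x hx => Prod.ext ?_ ?_, fun y hy => Prod.ext ?_ ?_⟩
  · exact dotProduct_eq_zero _ fun w => by simpa [prodDotBilin_apply] using hx (w, 0)
  · exact dotProduct_eq_zero _ fun w => by simpa [prodDotBilin_apply] using hx (0, w)
  · exact dotProduct_eq_zero _ fun w => by
      simpa [prodDotBilin_apply, dotProduct_comm] using hy (w, 0)
  · exact dotProduct_eq_zero _ fun w => by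
      simpa [prodDotBilin_apply, dotProduct_comm] using hy (0, w)

theorem exists_sum_pow_eq_prodDotBilin (p h : ℕ) [ExpChar K p] [PerfectRing K p] :
    ∃ ψ : ((m → K) × (m → K)) ≃ ((m → K) × (m → K)),
      ∀ c y, (∑ i, c.1 i * y.1 i ^ p ^ h) + (∑ i, c.2 i * y.2 i ^ p ^ h) =
        prodDotBilin K m c (ψ y) := by
  let frob := (iterateFrobeniusEquiv K p h).toEquiv
  refine ⟨(Equiv.piCongrRight fun _ => frob).prodCongr (Equiv.piCongrRight fun _ => frob),
    fun c y => ?_⟩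
  simp [prodDotBilin_apply, dotProduct, frob, iterateFrobenius_def]

end ProdDot

theorem stmt_18_general {F : Type*} [Field F] [Fintype F] {p ℓ h n : ℕ} [NeZero n]
    (hp : p.Prime) (hcard : Fintype.card F = p ^ ℓ)
    (lam : F) (hlam : lam ≠ 0)
    (ι : (Fin n → F) ≃ₗ[F] Rlam F n lam)
    (hι : ∀ v : Fin n → F,
      ι v = Ideal.Quotient.mk _ (∑ i : Fin n, C (v i) * (X : F[X]) ^ (i : ℕ)))
    (σ : Rlam F n lam → Rlam F n lam)
    (hσ : ∀ f : F[X],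
      σ (Ideal.Quotient.mk _ f) =
        Ideal.Quotient.mk _
          (f.sum fun i a => C (a ^ p ^ h) * X ^ ((n * orderOf lam - 1) * i)))
    (a a' b g : Rlam F n lam)
    (hgu : ∃ g' ∈ Ideal.span {b}, ∀ c ∈ Ideal.span {b}, c * (g * g') = c)
    (CM : Submodule F ((Fin n → F) × (Fin n → F)))
    (hCM : (CM : Set ((Fin n → F) × (Fin n → F))) =
      {x | ∃ u v w : Rlam F n lam,
        x = (ι.symm (u * a + w * b), ι.symm (v * a' + w * (b * g)))}) :
    (CM : Set ((Fin n → F) × (Fin n → F))) = {y | ∀ c ∈ CM, gin (p ^ h) c y = 0} ↔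
      (Module.finrank F CM = n ∧
       a * σ a = 0 ∧ a' * σ a' = 0 ∧ a * σ b = 0 ∧ σ a * b = 0 ∧
       a' * σ b = 0 ∧ σ a' * b = 0 ∧ b * σ b * (1 + g * σ g) = 0) := by
  have : Fact p.Prime := ⟨hp⟩
  have : CharP F p := charP_of_card_eq_prime_pow hcard
  obtain ⟨σ, rfl, hσC, hσX⟩ := Rlam.exists_ringHom_of_forall_mk (iterateFrobenius F p h) _ hσ
  have ht : 0 < orderOf lam := IsOfFinOrder.orderOf_pos <| isOfFinOrder_iff_pow_eq_one.2
    ⟨_, Nat.sub_pos_of_lt Fintype.one_lt_card, FiniteField.pow_card_sub_one_eq_one lam hlam⟩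
  have hlt : lam ^ orderOf lam = 1 := pow_orderOf_eq_one lam
  obtain ⟨ψ, hψ⟩ := exists_sum_pow_eq_prodDotBilin F (Fin n) p h
  have hdual : {y | ∀ c ∈ CM, gin (p ^ h) c y = 0} =
      ψ ⁻¹' (prodDotBilin F (Fin n)).orthogonal CM := by
    ext y
    simp only [gin, hψ, Set.mem_preimage, SetLike.mem_coe,
      LinearMap.BilinForm.mem_orthogonal_iff, Set.mem_ofPred_eq]
  obtain ⟨g', -, hg'⟩ := hgu
  let τ : Rlam F n lam →+ F := ((LinearMap.proj 0).comp ι.symm.toLinearMap).toAddMonoidHom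
  rw [hdual, LinearMap.BilinForm.coe_eq_preimage_orthogonal_iff
      (prodDotBilin_nondegenerate F (Fin n)), ← hdual,
    (Rlam.subset_setOf_gin_iff ι hι hσC ht hlt hσX (iterateFrobenius_def p h) hCM).trans
      (twoQuasi_selfOrthogonal_iff (Rlam.surjective_of_twisted ι hι hσC ht hlt hσX) τ
        (fun z => Rlam.eq_zero_of_forall_symm_mul_apply_zero ι hι hσC ht hlt hσX)
        (hg' b (Ideal.mem_span_singleton_self b))),
    Module.finrank_prod, Module.finrank_fin_fun, and_comm]
  exact and_congr_left' (by omega)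

theorem stmt_18 {F : Type*} [Field F] [Fintype F] {p ℓ h n : ℕ} [NeZero n]
    (hp : p.Prime) (hcard : Fintype.card F = p ^ ℓ) (hh : h < ℓ)
    (hn : Nat.gcd n (p ^ ℓ) = 1)
    (lam : F) (hlam : lam ≠ 0) (hlam1 : lam ^ (1 + p ^ h) = 1)
    (ι : (Fin n → F) ≃ₗ[F] Rlam F n lam)
    (hι : ∀ v : Fin n → F,
      ι v = Ideal.Quotient.mk _ (∑ i : Fin n, C (v i) * (X : F[X]) ^ (i : ℕ)))
    (σ : Rlam F n lam → Rlam F n lam)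
    (hσ : ∀ f : F[X],
      σ (Ideal.Quotient.mk _ f) =
        Ideal.Quotient.mk _
          (f.sum fun i a => C (a ^ p ^ h) * X ^ ((n * orderOf lam - 1) * i)))
    (a a' b g : Rlam F n lam)
    (hab : a * b = 0) (ha'b : a' * b = 0)
    (hg : g ∈ Ideal.span {b})
    (hgu : ∃ g' ∈ Ideal.span {b}, ∀ c ∈ Ideal.span {b}, c * (g * g') = c)
    (CM : Submodule F ((Fin n → F) × (Fin n → F)))
    (hCM : (CM : Set ((Fin n → F) × (Fin n → F))) =
      {x | ∃ u v w : Rlam F n lam,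
        x = (ι.symm (u * a + w * b), ι.symm (v * a' + w * (b * g)))}) :
    (CM : Set ((Fin n → F) × (Fin n → F))) = {y | ∀ c ∈ CM, gin (p ^ h) c y = 0} ↔
      (Module.finrank F CM = n ∧
       a * σ a = 0 ∧ a' * σ a' = 0 ∧ a * σ b = 0 ∧ σ a * b = 0 ∧
       a' * σ b = 0 ∧ σ a' * b = 0 ∧ b * σ b * (1 + g * σ g) = 0) :=
  stmt_18_general hp hcard lam hlam ι hι σ hσ a a' b g hgu CM hCM
end
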